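/- arXiv:math/9909171 — 6 statements merged into one kernel-verified Lean document; each statement's English description precedes it below -/
import Mathlib

section
/- Let n ≥ 1 and let ζ = exp(2πi/n). For each k ≥ 0 let d_k be the complex dimension of the space of homogeneous polynomials P(x,y) of degree k in ℂ[x,y] satisfying P(ζx, ζ⁻¹y) = P(x,y). Then in ℂ⟦u⟧ one has (Σ_{k≥0} d_k u^k) · (1−u²)(1−u^n) = 1 + u^n. -/
/-!
The substitution `x ↦ ζx, y ↦ ζ⁻¹y` is diagonal in the monomial basis: it scales `x^i y^j` by
`ζ^(i-j)`. Hence the invariant homogeneous polynomials of degree `k` are spanned by the monomials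
`x^i y^j` with `i + j = k` and `i ≡ j [MOD n]`, and `d_k` counts these pairs. Shifting
`(i, j) ↦ (i + 1, j + 1)` matches the pairs of degree `k` with those of degree `k + 2` except
`(0, k + 2)` and `(k + 2, 0)`, which count exactly when `n ∣ k + 2`. So
`(Σ d_k u^k)(1 - u²) = 2 Σ_{n ∣ k} u^k - 1`, and multiplying by `1 - uⁿ` gives `2 - (1 - uⁿ)`.
-/

open MvPolynomial

/-- The substitution `P(x,y) ↦ P(ax+by, cx+dy)` on `ℂ[x,y]`, for `g = [[a,b],[c,d]]`. -/
noncomputable def binarySubst (a b c d : ℂ) :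
    MvPolynomial (Fin 2) ℂ →ₐ[ℂ] MvPolynomial (Fin 2) ℂ :=
  aeval ![C a * X 0 + C b * X 1, C c * X 0 + C d * X 1]

open Finset

namespace MvPolynomial

variable {R σ : Type*} [CommRing R]

theorem aeval_C_mul_X_monomial (c : σ → R) (u : σ →₀ ℕ) (a : R) :
    aeval (fun i => C (c i) * X i) (monomial u a) =
      monomial u (a * u.prod fun i e => c i ^ e) := by
  rw [aeval_monomial, monomial_eq, C_mul, map_finsuppProd C]
  simp only [mul_pow, Finsupp.prod_mul, map_pow, algebraMap_eq]
  ring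

theorem coeff_aeval_C_mul_X (c : σ → R) (p : MvPolynomial σ R) (m : σ →₀ ℕ) :
    coeff m (aeval (fun i => C (c i) * X i) p) = (m.prod fun i e => c i ^ e) * coeff m p := by
  classical
  induction p using MvPolynomial.induction_on' with
  | monomial u a =>
    rw [aeval_C_mul_X_monomial, coeff_monomial, coeff_monomial]
    split_ifs with h
    · subst h; ring
    · rw [mul_zero]
  | add p q hp hq => rw [map_add, coeff_add, coeff_add, hp, hq, mul_add]

theorem ker_aeval_C_mul_X_sub_id [NoZeroDivisors R] (c : σ → R) :
    LinearMap.ker ((aeval fun i => C (c i) * X i).toLinearMap - LinearMap.id) =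
      restrictSupport R {m | (m.prod fun i e => c i ^ e) = 1} := by
  ext p
  simp only [LinearMap.mem_ker, LinearMap.sub_apply, AlgHom.toLinearMap_apply, LinearMap.id_apply,
    sub_eq_zero, MvPolynomial.ext_iff, coeff_aeval_C_mul_X, mem_restrictSupport_iff,
    Set.subset_def, mem_coe, mem_support_iff, Set.mem_ofPred_eq]
  exact forall_congr' fun m => by by_cases h : coeff m p = 0 <;> simp [h, mul_eq_right₀]

theorem homogeneousSubmodule_inf_restrictSupport (k : ℕ) (s : Set (σ →₀ ℕ)) :
    homogeneousSubmodule σ R k ⊓ restrictSupport R s =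
      restrictSupport R ({m | m.degree = k} ∩ s) := by
  rw [homogeneousSubmodule_eq_finsupp_supported]
  change restrictSupport R _ ⊓ _ = _
  ext p
  simp only [Submodule.mem_inf, mem_restrictSupport_iff, Set.subset_inter_iff]

theorem finrank_restrictSupport [Nontrivial R] (s : Finset (σ →₀ ℕ)) :
    Module.finrank R (restrictSupport R (s : Set (σ →₀ ℕ))) = #s := by
  rw [Module.finrank_eq_nat_card_basis (basisRestrictSupport R _), Nat.card_coe_set_eq,
    Set.ncard_coe_finset]

end MvPolynomial

theorem IsPrimitiveRoot.pow_mul_inv_pow_eq_one_iff {M : Type*} [CommGroupWithZero M] {ζ : M}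
    {n : ℕ} (hζ : IsPrimitiveRoot ζ n) (hn : n ≠ 0) (i j : ℕ) :
    ζ ^ i * ζ⁻¹ ^ j = 1 ↔ i ≡ j [MOD n] := by
  rw [inv_pow, mul_inv_eq_one₀ (pow_ne_zero _ (hζ.ne_zero hn)),
    (hζ.isOfFinOrder hn).pow_eq_pow_iff_modEq, ← hζ.eq_orderOf]

def invariantPairs (n k : ℕ) : Finset (ℕ × ℕ) := {p ∈ antidiagonal k | p.1 ≡ p.2 [MOD n]}

theorem card_invariantPairs_zero (n : ℕ) : #(invariantPairs n 0) = 1 := by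
  simp [invariantPairs, filter_singleton, Nat.ModEq.refl]

theorem card_invariantPairs_one (n : ℕ) : #(invariantPairs n 1) = if n ∣ 1 then 2 else 0 := by
  simp only [invariantPairs, card_filter, Nat.antidiagonal_succ, Nat.antidiagonal_zero, sum_cons,
    sum_map, sum_singleton, Function.Embedding.coe_prodMap, Prod.map_fst, Prod.map_snd,
    Function.Embedding.coeFn_mk, Function.Embedding.refl_apply, Nat.ModEq.comm (a := 0),
    Nat.modEq_zero_iff_dvd]
  split_ifs <;> rfl

theorem card_invariantPairs_add_two (n k : ℕ) :
    #(invariantPairs n (k + 2)) = #(invariantPairs n k) + if n ∣ k + 2 then 2 else 0 := by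
  simp only [invariantPairs, card_filter, Nat.antidiagonal_succ_succ', sum_cons, sum_map,
    Function.Embedding.coe_prodMap, Prod.map_fst, Prod.map_snd, Function.Embedding.coeFn_mk,
    Nat.succ_eq_add_one, (Nat.ModEq.refl 1).add_iff_right, Nat.ModEq.comm (a := 0),
    Nat.modEq_zero_iff_dvd]
  split_ifs <;> omega

theorem binarySubst_diagonal (a d : ℂ) :
    binarySubst a 0 0 d = aeval fun i => C (![a, d] i) * X i := by
  rw [binarySubst]
  congr 1
  funext i
  fin_cases i <;> simp

theorem finrank_homogeneousSubmodule_inf_ker_binarySubst_sub_id {ζ : ℂ} {n : ℕ}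
    (hζ : IsPrimitiveRoot ζ n) (hn : n ≠ 0) (k : ℕ) :
    Module.finrank ℂ ↥(homogeneousSubmodule (Fin 2) ℂ k ⊓
      LinearMap.ker ((binarySubst ζ 0 0 ζ⁻¹).toLinearMap - LinearMap.id)) =
      #(invariantPairs n k) := by
  have exponents : {m : Fin 2 →₀ ℕ | m.degree = k} ∩
      {m | (m.prod fun i e => ![ζ, ζ⁻¹] i ^ e) = 1} =
      ↑((invariantPairs n k).map
        (Finsupp.equivFunOnFinite.trans (finTwoArrowEquiv ℕ)).symm.toEmbedding) := by
    ext m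
    rw [mem_coe, mem_map_equiv, Equiv.symm_symm]
    simp only [Set.mem_inter_iff, Set.mem_ofPred_eq, Finsupp.degree_eq_sum, Fin.sum_univ_two,
      Finsupp.prod_fintype _ _ (fun i => pow_zero _), Fin.prod_univ_two,
      invariantPairs, mem_filter, HasAntidiagonal.mem_antidiagonal]
    exact and_congr Iff.rfl (hζ.pow_mul_inv_pow_eq_one_iff hn _ _)
  rw [binarySubst_diagonal, ker_aeval_C_mul_X_sub_id, homogeneousSubmodule_inf_restrictSupport,
    exponents, finrank_restrictSupport, card_map]

namespace PowerSeries

theorem mk_ite_dvd_mul_one_sub_X_pow {R : Type*} [CommRing R] {n : ℕ} (hn : n ≠ 0) :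
    PowerSeries.mk (fun k => if n ∣ k then (1 : R) else 0) * (1 - X ^ n) = 1 := by
  ext m
  rw [mul_sub, mul_one, map_sub, coeff_mul_X_pow', coeff_mk, coeff_mk, coeff_one]
  rcases Nat.eq_zero_or_pos m with rfl | hm
  · simp [hn]
  by_cases hnm : n ≤ m
  · obtain ⟨j, rfl⟩ := Nat.exists_eq_add_of_le hnm
    simp only [if_pos hnm, Nat.add_sub_cancel_left, Nat.dvd_add_right (dvd_refl n), sub_self,
      if_neg hm.ne']
  · rw [if_neg hnm, if_neg (fun h => hnm (Nat.le_of_dvd hm h)), if_neg hm.ne', sub_zero]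

theorem mk_card_invariantPairs_mul_one_sub_X_sq (R : Type*) [CommRing R] (n : ℕ) :
    PowerSeries.mk (fun k => (#(invariantPairs n k) : R)) * (1 - X ^ 2) =
      2 • PowerSeries.mk (fun k => if n ∣ k then 1 else 0) - 1 := by
  ext k
  rw [mul_sub, mul_one, map_sub, coeff_mul_X_pow', map_sub, map_nsmul, coeff_mk, coeff_mk,
    coeff_one]
  match k with
  | 0 => norm_num [card_invariantPairs_zero]
  | 1 => simp [card_invariantPairs_one]
  | k + 2 => simp [card_invariantPairs_add_two]

end PowerSeries

/-- For `n ≥ 1` and `ζ = exp(2πi/n)`, letting `d_k` be the dimension of the space of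
homogeneous polynomials `P(x,y)` of degree `k` with `P(ζx, ζ⁻¹y) = P(x,y)`, one has
`(Σ_k d_k u^k)(1−u²)(1−uⁿ) = 1 + uⁿ` in `ℂ⟦u⟧`. -/
theorem invariant_dimension_powerSeries (n : ℕ) (hn : 1 ≤ n) :
    letI ζ : ℂ := Complex.exp (2 * Real.pi * Complex.I / n)
    (PowerSeries.mk fun k =>
        ((Module.finrank ℂ
          ↥(homogeneousSubmodule (Fin 2) ℂ k ⊓
            LinearMap.ker ((binarySubst ζ 0 0 ζ⁻¹).toLinearMap - LinearMap.id)) : ℕ) : ℂ)) *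
      ((1 - PowerSeries.X ^ 2) * (1 - PowerSeries.X ^ n)) =
    1 + PowerSeries.X ^ n := by
  have hn₀ : n ≠ 0 := by omega
  have hζ := Complex.isPrimitiveRoot_exp n hn₀
  simp_rw [finrank_homogeneousSubmodule_inf_ker_binarySubst_sub_id hζ hn₀]
  rw [← mul_assoc, PowerSeries.mk_card_invariantPairs_mul_one_sub_X_sq, sub_mul, smul_mul_assoc,
    PowerSeries.mk_ite_dvd_mul_one_sub_X_pow hn₀]
  ring
end

section
/- For every integer n ≥ 2, the group with presentation ⟨S, T, U ∣ S^n = T² = U² = STU⟩ is isomorphic to the generalized quaternion group of order 4n. -/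
/-!
From `U² = STU` one gets `U = ST`, after which `T² = U²` says `U⁻¹SU = S⁻¹`; conjugating
`Sⁿ = U²` by `U` then gives `S⁻ⁿ = Sⁿ`, so `S²ⁿ = 1`. Hence `S` and `U` satisfy the defining
relations `a²ⁿ = 1, b² = aⁿ, b⁻¹ab = a⁻¹` of the quaternion group, while `a 1, xa 1, xa 0`
satisfy those of the presentation, and the two induced homomorphisms are inverse to each other
because they are so on generators.
-/

/-- The relators `S^n(T²)⁻¹, T²(U²)⁻¹, U²(STU)⁻¹` of the presentation
`⟨S,T,U ∣ Sⁿ = T² = U² = STU⟩`, with `S, T, U` the generators `0, 1, 2`. -/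
def quaternionRels (n : ℕ) : Set (FreeGroup (Fin 3)) :=
  {FreeGroup.of 0 ^ n * (FreeGroup.of 1 ^ 2)⁻¹,
   FreeGroup.of 1 ^ 2 * (FreeGroup.of 2 ^ 2)⁻¹,
   FreeGroup.of 2 ^ 2 * (FreeGroup.of 0 * FreeGroup.of 1 * FreeGroup.of 2)⁻¹}

section GroupLemmas

variable {H : Type*} [Group H] {x y : H}

def zmodPow {m : ℕ} (x : H) (hx : x ^ m = 1) (i : ZMod m) : H :=
  (ZMod.lift m ⟨zmultiplesHom (Additive H) (.ofMul x), by
    simp only [zmultiplesHom_apply]; exact_mod_cast congrArg Additive.ofMul hx⟩ i).toMul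

theorem zmodPow_intCast {m : ℕ} (hx : x ^ m = 1) (k : ℤ) : zmodPow x hx k = x ^ k := by
  simp [zmodPow, ZMod.lift_coe]

theorem zpow_mul_eq_mul_zpow_neg (hxy : y⁻¹ * x * y = x⁻¹) (k : ℤ) :
    x ^ k * y = y * x ^ (-k) := by
  have hconj : x⁻¹ ^ k = y⁻¹ * x ^ k * y := by
    simpa [hxy] using conj_zpow (a := y⁻¹) (b := x) (i := k)
  rw [zpow_neg, ← inv_zpow, hconj]
  group

end GroupLemmas

namespace QuaternionGroup

variable {n : ℕ}

@[simp]
theorem a_one_zpow (k : ℤ) : (a 1 : QuaternionGroup n) ^ k = a k := by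
  cases k with
  | ofNat k => simp
  | negSucc k => rw [zpow_negSucc, a_one_pow, Int.cast_negSucc]; rfl

theorem hom_ext {H : Type*} [Group H] {f g : QuaternionGroup n →* H}
    (ha : f (a 1) = g (a 1)) (hxa : f (xa 0) = g (xa 0)) : f = g := by
  have hai (i : ZMod (2 * n)) : f (a i) = g (a i) := by
    rw [← ZMod.intCast_zmod_cast i, ← a_one_zpow, map_zpow, map_zpow, ha]
  ext (i | i)
  · exact hai i
  · rw [← zero_add i, ← xa_mul_a, map_mul, map_mul, hai, hxa]

variable {H : Type*} [Group H] {x y : H}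

def lift (x y : H) (hx : x ^ (2 * n) = 1) (hy : y ^ 2 = x ^ n) (hxy : y⁻¹ * x * y = x⁻¹) :
    QuaternionGroup n →* H where
  toFun
    | a i => zmodPow x hx i
    | xa i => y * zmodPow x hx i
  map_one' := by
    show zmodPow x hx 0 = 1
    simpa using zmodPow_intCast hx 0
  map_mul' := by
    have hy' : y * y = x ^ (n : ℤ) := by rw [← sq, hy, zpow_natCast]
    have hn : ((n : ℤ) : ZMod (2 * n)) = n := Int.cast_natCast n
    -- every residue is an integer cast, so each case is an identity between integer powers
    rintro (i | i) (j | j) <;>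
      obtain ⟨i, rfl⟩ := ZMod.intCast_surjective i <;>
      obtain ⟨j, rfl⟩ := ZMod.intCast_surjective j
    · simp only [a_mul_a, ← Int.cast_add, zmodPow_intCast, zpow_add]
    · simp only [a_mul_xa, ← Int.cast_sub, zmodPow_intCast, ← mul_assoc,
        zpow_mul_eq_mul_zpow_neg hxy]
      rw [mul_assoc, ← zpow_add]; group
    · simp only [xa_mul_a, ← Int.cast_add, zmodPow_intCast, zpow_add, mul_assoc]
    · simp only [xa_mul_xa, ← hn, ← Int.cast_add, ← Int.cast_sub, zmodPow_intCast]
      rw [mul_assoc y, ← mul_assoc _ y, zpow_mul_eq_mul_zpow_neg hxy, ← mul_assoc,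
        ← mul_assoc, hy']
      group

variable (hx : x ^ (2 * n) = 1) (hy : y ^ 2 = x ^ n) (hxy : y⁻¹ * x * y = x⁻¹)

@[simp]
theorem lift_a_one : lift x y hx hy hxy (a 1) = x := by
  show zmodPow x hx 1 = x
  simpa using zmodPow_intCast hx 1

theorem lift_xa (i : ZMod (2 * n)) : lift x y hx hy hxy (xa i) = y * lift x y hx hy hxy (a i) :=
  rfl

@[simp]
theorem lift_xa_zero : lift x y hx hy hxy (xa 0) = y := by
  rw [lift_xa, a_zero, map_one, mul_one]

end QuaternionGroup

section Presentation

variable {G : Type*} [Group G] {s t u : G}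

theorem eq_mul_of_sq_eq_mul_mul (h : u ^ 2 = s * t * u) : u = s * t :=
  mul_right_cancel (b := u) (by rw [← sq, h])

theorem inv_mul_mul_eq_inv_of_sq_eq_sq (h₂ : t ^ 2 = u ^ 2) (h₃ : u ^ 2 = s * t * u) :
    u⁻¹ * s * u = s⁻¹ := by
  have ht : t = s⁻¹ * u := by rw [eq_mul_of_sq_eq_mul_mul h₃]; group
  rw [ht, sq, sq] at h₂
  have hu : s⁻¹ * u * s⁻¹ = u := mul_right_cancel (b := u) (by rw [← h₂]; group)
  calc u⁻¹ * s * u = u⁻¹ * (s * (s⁻¹ * u * s⁻¹)) := by rw [hu]; group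
    _ = s⁻¹ := by group

theorem pow_two_mul_eq_one_of_inv_mul_mul_eq_inv {n : ℕ} (h : s ^ n = u ^ 2)
    (hsu : u⁻¹ * s * u = s⁻¹) : s ^ (2 * n) = 1 := by
  have hconj : (u⁻¹ * s * u) ^ n = u⁻¹ * s ^ n * u := by
    simpa using conj_pow (a := u⁻¹) (b := s) (i := n)
  have key : s⁻¹ ^ n = s ^ n := by
    rw [← hsu, hconj, h]; group
  rw [two_mul, pow_add, mul_eq_one_iff_eq_inv, ← inv_pow, key]

theorem eq_mul_of_sq_eq_sq (h₂ : t ^ 2 = u ^ 2) (h₃ : u ^ 2 = s * t * u) : t = u * s :=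
  calc t = s⁻¹ * (s * t) := by group
    _ = s⁻¹ * u := by rw [← eq_mul_of_sq_eq_mul_mul h₃]
    _ = u * (u⁻¹ * s * u)⁻¹ := by group
    _ = u * s := by rw [inv_mul_mul_eq_inv_of_sq_eq_sq h₂ h₃, inv_inv]

end Presentation

theorem presentedGroup_quaternionRels_relations (n : ℕ) :
    (PresentedGroup.of 0 : PresentedGroup (quaternionRels n)) ^ n = .of 1 ^ 2 ∧
    (PresentedGroup.of 1 : PresentedGroup (quaternionRels n)) ^ 2 = .of 2 ^ 2 ∧
    (PresentedGroup.of 2 : PresentedGroup (quaternionRels n)) ^ 2 = .of 0 * .of 1 * .of 2 := by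
  refine ⟨?_, ?_, ?_⟩ <;> simp only [PresentedGroup.of, ← map_pow, ← map_mul] <;>
    exact PresentedGroup.mk_eq_mk_of_mul_inv_mem (by simp [quaternionRels])

theorem quaternionRels_lift_eq_one (n : ℕ) : ∀ r ∈ quaternionRels n,
    FreeGroup.lift ![(QuaternionGroup.a 1 : QuaternionGroup n), .xa 1, .xa 0] r = 1 := by
  rintro r (rfl | rfl | rfl) <;> simp [-mul_inv_rev]

theorem presentedGroup_iso_quaternionGroup_general (n : ℕ) :
    Nonempty (PresentedGroup (quaternionRels n) ≃* QuaternionGroup n) := by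
  obtain ⟨h₁, h₂, h₃⟩ := presentedGroup_quaternionRels_relations n
  have hsu := inv_mul_mul_eq_inv_of_sq_eq_sq h₂ h₃
  let F := PresentedGroup.toGroup (quaternionRels_lift_eq_one n)
  let G := QuaternionGroup.lift (PresentedGroup.of 0) (PresentedGroup.of 2)
    (pow_two_mul_eq_one_of_inv_mul_mul_eq_inv (h₁.trans h₂) hsu) (h₂.symm.trans h₁.symm) hsu
  refine ⟨MonoidHom.toMulEquiv F G ?_ ?_⟩
  · ext i
    fin_cases i <;> simp [F, G, QuaternionGroup.lift_xa, ← eq_mul_of_sq_eq_sq h₂ h₃]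
  · apply QuaternionGroup.hom_ext <;> simp [F, G]

/-- For `n ≥ 2`, the group `⟨S,T,U ∣ Sⁿ = T² = U² = STU⟩` is isomorphic to the
generalized quaternion group of order `4n`. -/
theorem presentedGroup_iso_quaternionGroup (n : ℕ) (hn : 2 ≤ n) :
    Nonempty (PresentedGroup (quaternionRels n) ≃* QuaternionGroup n) :=
  presentedGroup_iso_quaternionGroup_general n
end

section
/- Let ε = exp(2πi/8), and in SL(2,ℂ) let S = (1/√2)·[[ε⁻¹, ε³],[ε, ε]] and U = [[0, 1],[−1, 0]]. Then the subgroup of SL(2,ℂ) generated by S and U (the binary tetrahedral group) has cardinality 24. -/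
/-!
Up to the factor `1/2`, `S` and `U` are the images of the Hurwitz quaternions `(1 - i - j + k)/2`
and `j` under the embedding `a + bi + cj + dk ↦ [[a + bi, c + di], [-c + di, a - bi]]` of the
quaternions into `M₂(ℂ)`, which sends the norm to the determinant. The 24 unit Hurwitz quaternions
`±1, ±i, ±j, ±k, (±1 ± i ± j ± k)/2` form a group, so their images form a subgroup of `SL(2, ℂ)` of
order 24 containing `S` and `U`; conversely each of them is reached from `1` by left
multiplications by `S` and `U`. After doubling, all quaternions involved have integer coordinates,
and both facts become finite computations in `ℍ[ℤ]`.
-/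

open Complex Matrix Quaternion Finset
open scoped MatrixGroups

instance {R : Type*} [Zero R] [One R] [Neg R] [DecidableEq R] : DecidableEq ℍ[R] :=
  (Quaternion.equivProd R).injective.decidableEq

namespace Quaternion

def toComplexMatrix : ℍ[ℤ] →+* Matrix (Fin 2) (Fin 2) ℂ where
  toFun x := !![x.re + x.imI * I, x.imJ + x.imK * I; -x.imJ + x.imK * I, x.re - x.imI * I]
  map_one' := by ext i j; fin_cases i <;> fin_cases j <;> simp
  map_mul' x y := by
    simp only [mul_fin_two, re_mul, imI_mul, imJ_mul, imK_mul]
    ext i j; fin_cases i <;> fin_cases j <;> simp <;> ring_nf <;> simp only [I_sq] <;> ring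
  map_zero' := by ext i j; fin_cases i <;> fin_cases j <;> simp
  map_add' x y := by ext i j; fin_cases i <;> fin_cases j <;> simp <;> ring

theorem det_toComplexMatrix (x : ℍ[ℤ]) : (toComplexMatrix x).det = normSq x := by
  rw [normSq_def']
  simp only [toComplexMatrix, RingHom.coe_mk, MonoidHom.coe_mk, OneHom.coe_mk, det_fin_two_of]
  push_cast
  ring_nf
  simp only [I_sq]
  ring

theorem toComplexMatrix_injective : Function.Injective toComplexMatrix := by
  refine (injective_iff_map_eq_zero _).2 fun x hx => ?_
  have h₀ := congrFun₂ hx 0 0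
  have h₁ := congrFun₂ hx 0 1
  simp [toComplexMatrix, Complex.ext_iff] at h₀ h₁
  ext <;> simp [h₀, h₁]

end Quaternion

namespace BinaryTetrahedral

def doubledUnits : Finset ℍ[ℤ] :=
  {⟨2, 0, 0, 0⟩, ⟨-2, 0, 0, 0⟩, ⟨0, 2, 0, 0⟩, ⟨0, -2, 0, 0⟩,
   ⟨0, 0, 2, 0⟩, ⟨0, 0, -2, 0⟩, ⟨0, 0, 0, 2⟩, ⟨0, 0, 0, -2⟩,
   ⟨1, 1, 1, 1⟩, ⟨1, 1, 1, -1⟩, ⟨1, 1, -1, 1⟩, ⟨1, 1, -1, -1⟩,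
   ⟨1, -1, 1, 1⟩, ⟨1, -1, 1, -1⟩, ⟨1, -1, -1, 1⟩, ⟨1, -1, -1, -1⟩,
   ⟨-1, 1, 1, 1⟩, ⟨-1, 1, 1, -1⟩, ⟨-1, 1, -1, 1⟩, ⟨-1, 1, -1, -1⟩,
   ⟨-1, -1, 1, 1⟩, ⟨-1, -1, 1, -1⟩, ⟨-1, -1, -1, 1⟩, ⟨-1, -1, -1, -1⟩}

theorem card_doubledUnits : #doubledUnits = 24 := by decide

theorem two_mem_doubledUnits : 2 ∈ doubledUnits := by decide

theorem star_mem_doubledUnits : ∀ x ∈ doubledUnits, star x ∈ doubledUnits := by decide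

theorem normSq_of_mem_doubledUnits : ∀ x ∈ doubledUnits, normSq x = 4 := by decide +kernel

theorem exists_mul_eq_two_mul :
    ∀ x ∈ doubledUnits, ∀ y ∈ doubledUnits, ∃ z ∈ doubledUnits, x * y = 2 * z := by
  decide +kernel

noncomputable def toSL (x : doubledUnits) : SL(2, ℂ) :=
  ⟨(2 : ℂ)⁻¹ • toComplexMatrix x, by
    rw [det_smul, det_toComplexMatrix, normSq_of_mem_doubledUnits x x.2]
    norm_num⟩

theorem toSL_injective : Function.Injective toSL := fun _ _ h =>
  Subtype.ext <| toComplexMatrix_injective <|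
    smul_right_injective _ (inv_ne_zero two_ne_zero) (congrArg Subtype.val h)

theorem toSL_mul_toSL {x y z : doubledUnits} (h : x.1 * y.1 = 2 * z.1) :
    toSL x * toSL y = toSL z := by
  apply Subtype.ext
  change (2 : ℂ)⁻¹ • toComplexMatrix x * (2⁻¹ • toComplexMatrix y) = 2⁻¹ • toComplexMatrix z
  rw [smul_mul_smul, ← map_mul, h, map_mul, map_ofNat, two_mul]
  module

theorem toSL_two : toSL ⟨2, two_mem_doubledUnits⟩ = 1 := by
  apply Subtype.ext
  change (2 : ℂ)⁻¹ • toComplexMatrix 2 = 1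
  rw [map_ofNat, ← map_ofNat (algebraMap ℂ (Matrix (Fin 2) (Fin 2) ℂ)) 2,
    Algebra.algebraMap_eq_smul_one, inv_smul_smul₀ two_ne_zero]

theorem toSL_mul_toSL_star (x : doubledUnits) :
    toSL x * toSL ⟨star x.1, star_mem_doubledUnits x.1 x.2⟩ = 1 := by
  rw [← toSL_two]
  apply toSL_mul_toSL
  rw [self_mul_star, normSq_of_mem_doubledUnits x.1 x.2]
  rfl

def reach (A : Finset doubledUnits) : ℕ → Finset doubledUnits
  | 0 => {⟨2, two_mem_doubledUnits⟩}
  | n + 1 => univ.filter fun z =>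
      z ∈ reach A n ∨ ∃ g ∈ A, ∃ y ∈ reach A n, g.1 * y.1 = 2 * z.1

theorem toSL_mem_closure_of_mem_reach {A : Finset doubledUnits} :
    ∀ {n : ℕ} {z : doubledUnits}, z ∈ reach A n → toSL z ∈ Subgroup.closure (toSL '' A)
  | 0, z, hz => by
    obtain rfl := mem_singleton.1 hz
    exact toSL_two ▸ one_mem _
  | n + 1, z, hz => by
    obtain hz | ⟨g, hg, y, hy, h⟩ := (mem_filter.1 hz).2
    · exact toSL_mem_closure_of_mem_reach hz
    · rw [← toSL_mul_toSL h]
      exact mul_mem (Subgroup.subset_closure (Set.mem_image_of_mem _ hg))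
        (toSL_mem_closure_of_mem_reach hy)

-- Without `show`, the anonymous constructor has type `QuaternionAlgebra ℤ (-1) 0 (-1)` rather
-- than `ℍ[ℤ]`, and `decide` finds no `Decidable` instance for the membership.
def doubledS : doubledUnits := ⟨show ℍ[ℤ] from ⟨1, -1, -1, 1⟩, by decide⟩

def doubledU : doubledUnits := ⟨show ℍ[ℤ] from ⟨0, 0, 2, 0⟩, by decide⟩

theorem reach_doubledS_doubledU : reach {doubledS, doubledU} 5 = univ := by decide +kernel

theorem coe_toSL_doubledS :
    letI ε : ℂ := cexp (2 * Real.pi * I / 8)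
    letI s : ℂ := (Real.sqrt 2 : ℝ)
    (toSL doubledS : Matrix (Fin 2) (Fin 2) ℂ) =
      !![(1/s) * ε⁻¹, (1/s) * ε^3; (1/s) * ε, (1/s) * ε] := by
  have hε : cexp (2 * Real.pi * I / 8) = Real.sqrt 2 * ((1 + I) / 2) := by
    rw [show 2 * Real.pi * I / 8 = ((Real.pi / 4 : ℝ) : ℂ) * I by push_cast; ring, exp_mul_I,
      ← ofReal_cos, ← ofReal_sin, Real.cos_pi_div_four, Real.sin_pi_div_four]
    push_cast
    ring
  have hs : ((Real.sqrt 2 : ℝ) : ℂ) ^ 2 = 2 := by norm_cast; exact Real.sq_sqrt zero_le_two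
  have hs0 : ((Real.sqrt 2 : ℝ) : ℂ) ≠ 0 := by norm_cast; positivity
  ext i j
  fin_cases i <;> fin_cases j <;> simp [toSL, doubledS, toComplexMatrix, hε] <;> field_simp
  · rw [hs, eq_div_iff (by simp [Complex.ext_iff])]
    linear_combination -2 * I_sq
  · rw [hs]
    linear_combination -(6 + 2 * I) * I_sq

theorem coe_toSL_doubledU : (toSL doubledU : Matrix (Fin 2) (Fin 2) ℂ) = !![0, 1; -1, 0] := by
  ext i j
  fin_cases i <;> fin_cases j <;> simp [toSL, doubledU, toComplexMatrix]

end BinaryTetrahedral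

open BinaryTetrahedral

noncomputable def binaryTetrahedralGroup : Subgroup SL(2, ℂ) where
  carrier := Set.range toSL
  mul_mem' := by
    rintro _ _ ⟨x, rfl⟩ ⟨y, rfl⟩
    obtain ⟨z, hz, h⟩ := exists_mul_eq_two_mul x.1 x.2 y.1 y.2
    exact ⟨⟨z, hz⟩, (toSL_mul_toSL h).symm⟩
  one_mem' := ⟨_, toSL_two⟩
  inv_mem' := by
    rintro _ ⟨x, rfl⟩
    exact ⟨_, (inv_eq_of_mul_eq_one_right (toSL_mul_toSL_star x)).symm⟩

theorem card_binaryTetrahedralGroup : Nat.card binaryTetrahedralGroup = 24 := by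
  change Nat.card (Set.range toSL) = 24
  rw [Nat.card_range_of_injective toSL_injective, Nat.card_eq_fintype_card, Fintype.card_coe,
    card_doubledUnits]

theorem closure_eq_binaryTetrahedralGroup :
    Subgroup.closure {toSL doubledS, toSL doubledU} = binaryTetrahedralGroup := by
  refine le_antisymm ((Subgroup.closure_le _).2 ?_) ?_
  · rintro _ (rfl | rfl) <;> exact ⟨_, rfl⟩
  · rintro _ ⟨z, rfl⟩
    rw [← Set.image_pair, ← coe_pair]
    exact toSL_mem_closure_of_mem_reach (reach_doubledS_doubledU ▸ mem_univ z)

/-- With `ε = exp(2πi/8)`, the subgroup of `SL(2,ℂ)` generated by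
`S = (1/√2)[[ε⁻¹, ε³],[ε, ε]]` and `U = [[0,1],[−1,0]]` — the binary tetrahedral
group — has 24 elements. -/
theorem card_binaryTetrahedral :
    letI ε : ℂ := Complex.exp (2 * Real.pi * Complex.I / 8)
    letI s : ℂ := (Real.sqrt 2 : ℝ)
    letI S : Matrix.SpecialLinearGroup (Fin 2) ℂ :=
      ⟨!![(1/s) * ε⁻¹, (1/s) * ε^3; (1/s) * ε, (1/s) * ε], by
        have hεdef : ε = Complex.exp (2 * Real.pi * Complex.I / 8) := rfl
        have hsdef : s = ((Real.sqrt 2 : ℝ) : ℂ) := rfl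
        have hε : ε ≠ 0 := Complex.exp_ne_zero _
        have h4 : ε ^ 4 = -1 := by
          rw [hεdef, ← Complex.exp_nat_mul]
          rw [show (4 : ℕ) * (2 * (Real.pi : ℂ) * Complex.I / 8) = Real.pi * Complex.I by
            push_cast; ring]
          exact Complex.exp_pi_mul_I
        have hs : s ^ 2 = 2 := by
          rw [hsdef]; norm_cast; exact Real.sq_sqrt (by norm_num)
        have hs0 : s ≠ 0 := by intro h; rw [h] at hs; norm_num at hs
        rw [Matrix.det_fin_two_of]
        field_simp
        linear_combination -h4 - hs⟩
    letI U : Matrix.SpecialLinearGroup (Fin 2) ℂ :=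
      ⟨!![0, 1; -1, 0], by simp [Matrix.det_fin_two_of]⟩
    Nat.card (Subgroup.closure {S, U} : Subgroup (Matrix.SpecialLinearGroup (Fin 2) ℂ)) = 24 := by
  rw [← card_binaryTetrahedralGroup, ← closure_eq_binaryTetrahedralGroup]
  exact congrArg (fun A => Nat.card (Subgroup.closure A))
    (congrArg₂ (fun a b => ({a, b} : Set SL(2, ℂ)))
      (Subtype.ext coe_toSL_doubledS.symm) (Subtype.ext coe_toSL_doubledU.symm))
end

section
/- For complex numbers α, β, the polynomial x⁶ + αx⁴ + βx² + 1 ∈ ℂ[x] is squarefree if and only if 4(α³ + β³) − α²β² − 18αβ + 27 ≠ 0. -/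
open Polynomial

/-!
The sextic is `g(X²)` for the cubic `g = X³ + αX² + βX + 1`, and the expression in question is
minus the discriminant of `g`. In characteristic `≠ 2`, `g(X²)` is squarefree exactly when `g`
is squarefree and `g(0) ≠ 0`; here `g(0) = 1`, and over `ℂ` the cubic `g` is squarefree exactly
when its discriminant is nonzero.
-/

theorem Squarefree.of_expand {R : Type*} [CommRing R] [IsDomain R] {n : ℕ} (hn : 0 < n)
    {f : R[X]} (hf : Squarefree (expand R n f)) : Squarefree f := by
  have := isLocalHom_expand R hn
  exact fun g hg => (hf _ (by simpa using map_dvd (expand R n) hg)).of_map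

namespace Polynomial

theorem coeff_zero_ne_zero_of_squarefree_expand {R : Type*} [CommRing R] [IsDomain R] {n : ℕ}
    (hn : 2 ≤ n) {f : R[X]} (hf : Squarefree (expand R n f)) : f.coeff 0 ≠ 0 := by
  intro h0
  have hX : X * X ∣ expand R n f := calc
    X * X = (X ^ 2 : R[X]) := (sq X).symm
    _ ∣ X ^ n := pow_dvd_pow X hn
    _ = expand R n X := (expand_X n).symm
    _ ∣ expand R n f := _root_.map_dvd _ (X_dvd_iff.mpr h0)
  exact not_isUnit_X (hf X hX)

/-- The derivative of `f(X ^ n)` is `n X ^ (n - 1) f'(X ^ n)`, and `X` is coprime to `f(X ^ n)`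
because `f(0) ≠ 0`. -/
theorem separable_expand {K : Type*} [Field K] {n : ℕ} (hn : (n : K) ≠ 0) {f : K[X]}
    (hf : f.Separable) (h0 : f.coeff 0 ≠ 0) : (expand K n f).Separable := by
  have hnpos : 0 < n := Nat.pos_of_ne_zero (by rintro rfl; simp at hn)
  have hX : IsCoprime (expand K n f) X := by
    refine (irreducible_X.coprime_iff_not_dvd.mpr ?_).symm
    rwa [X_dvd_iff, coeff_expand hnpos, if_pos (dvd_zero n), Nat.zero_div]
  have hn_unit : IsUnit (n : K[X]) := by
    rw [← C_eq_natCast]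
    exact isUnit_C.mpr (IsUnit.mk0 _ hn)
  rw [separable_def, derivative_expand]
  exact (IsCoprime.map hf (expand K n).toRingHom).mul_right
    ((isCoprime_mul_unit_left_right hn_unit _ _).mpr hX.pow_right)

theorem squarefree_expand_iff {K : Type*} [Field K] [PerfectField K] {n : ℕ} (hn : 2 ≤ n)
    (hnK : (n : K) ≠ 0) {f : K[X]} :
    Squarefree (expand K n f) ↔ Squarefree f ∧ f.coeff 0 ≠ 0 :=
  ⟨fun h => ⟨h.of_expand (by omega), coeff_zero_ne_zero_of_squarefree_expand hn h⟩,
    fun ⟨hf, h0⟩ =>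
      (separable_expand hnK (PerfectField.separable_iff_squarefree.mpr hf) h0).squarefree⟩

end Polynomial

theorem Cubic.discr_ne_zero_iff_squarefree {K : Type*} [Field K] [IsAlgClosed K] {P : Cubic K}
    (ha : P.a ≠ 0) : P.discr ≠ 0 ↔ Squarefree P.toPoly := by
  rw [discr_ne_zero_iff_roots_nodup (φ := RingHom.id K) ha (IsAlgClosed.splits _), map_roots,
    Polynomial.map_id, nodup_roots_iff_of_splits (ne_zero_of_a_ne_zero ha) (IsAlgClosed.splits _),
    PerfectField.separable_iff_squarefree]

/-- For complex `α, β`, the polynomial `x⁶ + αx⁴ + βx² + 1 ∈ ℂ[x]` is squarefree iff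
`4(α³+β³) − α²β² − 18αβ + 27 ≠ 0`. -/
theorem squarefree_sextic_iff (α β : ℂ) :
    Squarefree (X ^ 6 + C α * X ^ 4 + C β * X ^ 2 + 1 : ℂ[X]) ↔
      4 * (α ^ 3 + β ^ 3) - α ^ 2 * β ^ 2 - 18 * α * β + 27 ≠ 0 := by
  set P : Cubic ℂ := ⟨1, α, β, 1⟩
  have hsextic : (X ^ 6 + C α * X ^ 4 + C β * X ^ 2 + 1 : ℂ[X]) = expand ℂ 2 P.toPoly := by
    simp [P, Cubic.toPoly, ← pow_mul]
  have hdiscr : 4 * (α ^ 3 + β ^ 3) - α ^ 2 * β ^ 2 - 18 * α * β + 27 = -P.discr := by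
    simp only [P, Cubic.discr]
    ring
  have hcoeff : P.toPoly.coeff 0 ≠ 0 := by simp [P, Cubic.toPoly]
  rw [hsextic, squarefree_expand_iff le_rfl two_ne_zero, hdiscr, neg_ne_zero,
    Cubic.discr_ne_zero_iff_squarefree one_ne_zero, and_iff_left hcoeff]
end

section
/- For complex numbers α, β set X(α,β) = 4(α³ + β³) − α²β² − 18αβ + 27 and Y(α,β) = αβ. Then for (α₁,β₁), (α₂,β₂) ∈ ℂ², one has X(α₁,β₁) = X(α₂,β₂) and Y(α₁,β₁) = Y(α₂,β₂) if and only if there exists ω ∈ ℂ with ω³ = 1 such that either (α₂, β₂) = (ωα₁, ω⁻¹β₁) or (α₂, β₂) = (ωβ₁, ω⁻¹α₁). In other words, the pair (X,Y) separates the orbits of the order-6 group of transformations generated by (α,β) ↦ (ωα, ω⁻¹β) for ω³ = 1 and (α,β) ↦ (β,α). -/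
/-- The invariants `X(α,β) = 4(α³+β³) − α²β² − 18αβ + 27` and `Y(α,β) = αβ` agree on two
points of `ℂ²` iff the points are related by a transformation `(α,β) ↦ (ωα, ω⁻¹β)` or
`(α,β) ↦ (ωβ, ω⁻¹α)` with `ω³ = 1`. -/
theorem X_Y_separate_orbits (α₁ β₁ α₂ β₂ : ℂ) :
    (4 * (α₁ ^ 3 + β₁ ^ 3) - α₁ ^ 2 * β₁ ^ 2 - 18 * α₁ * β₁ + 27 =
        4 * (α₂ ^ 3 + β₂ ^ 3) - α₂ ^ 2 * β₂ ^ 2 - 18 * α₂ * β₂ + 27 ∧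
      α₁ * β₁ = α₂ * β₂) ↔
    ∃ ω : ℂ, ω ^ 3 = 1 ∧
      ((α₂ = ω * α₁ ∧ β₂ = ω⁻¹ * β₁) ∨ (α₂ = ω * β₁ ∧ β₂ = ω⁻¹ * α₁)) := by
  constructor
  · rintro ⟨hX, hY⟩
    have hS : α₁ ^ 3 + β₁ ^ 3 = α₂ ^ 3 + β₂ ^ 3 := by
      linear_combination hX / 4 + ((α₁ * β₁ + α₂ * β₂ + 18) / 4) * hY
    have hQ : (α₂ ^ 3 - α₁ ^ 3) * (α₂ ^ 3 - β₁ ^ 3) = 0 := by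
      linear_combination (-(α₂ ^ 3)) * hS +
        ((α₁ * β₁) ^ 2 + (α₁ * β₁) * (α₂ * β₂) + (α₂ * β₂) ^ 2) * hY
    rcases mul_eq_zero.mp hQ with h | h
    · have hA : α₂ ^ 3 = α₁ ^ 3 := by linear_combination h
      by_cases hα : α₁ = 0
      · have hα2 : α₂ = 0 := by
          have : α₂ ^ 3 = 0 := by rw [hA, hα]; ring
          exact pow_eq_zero_iff (by norm_num) |>.mp this
        have hB : β₂ ^ 3 = β₁ ^ 3 := by
          rw [hα, hα2] at hS; linear_combination -hS
        by_cases hβ : β₁ = 0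
        · have hβ2 : β₂ = 0 := by
            have : β₂ ^ 3 = 0 := by rw [hB, hβ]; ring
            exact pow_eq_zero_iff (by norm_num) |>.mp this
          exact ⟨1, by norm_num, Or.inl ⟨by simp [hα2, hα], by simp [hβ2, hβ]⟩⟩
        · have hβ2 : β₂ ≠ 0 := by
            intro hz
            apply hβ
            have : β₁ ^ 3 = 0 := by rw [← hB, hz]; ring
            exact pow_eq_zero_iff (by norm_num) |>.mp this
          refine ⟨β₁ / β₂, ?_, Or.inl ⟨by simp [hα, hα2], ?_⟩⟩
          · field_simp
            linear_combination -hB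
          · rw [inv_div]
            field_simp
      · have hα2 : α₂ ≠ 0 := by
          intro hz
          apply hα
          have : α₁ ^ 3 = 0 := by rw [← hA, hz]; ring
          exact pow_eq_zero_iff (by norm_num) |>.mp this
        refine ⟨α₂ / α₁, ?_, Or.inl ⟨by field_simp, ?_⟩⟩
        · field_simp
          linear_combination hA
        · rw [inv_div]
          field_simp
          linear_combination -hY
    · have hA : α₂ ^ 3 = β₁ ^ 3 := by linear_combination h
      by_cases hβ : β₁ = 0
      · have hα2 : α₂ = 0 := by
          have : α₂ ^ 3 = 0 := by rw [hA, hβ]; ring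
          exact pow_eq_zero_iff (by norm_num) |>.mp this
        have hB : β₂ ^ 3 = α₁ ^ 3 := by
          rw [hβ, hα2] at hS; linear_combination -hS
        by_cases hα : α₁ = 0
        · have hβ2 : β₂ = 0 := by
            have : β₂ ^ 3 = 0 := by rw [hB, hα]; ring
            exact pow_eq_zero_iff (by norm_num) |>.mp this
          exact ⟨1, by norm_num, Or.inr ⟨by simp [hα2, hβ], by simp [hβ2, hα]⟩⟩
        · have hβ2 : β₂ ≠ 0 := by
            intro hz
            apply hα
            have : α₁ ^ 3 = 0 := by rw [← hB, hz]; ring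
            exact pow_eq_zero_iff (by norm_num) |>.mp this
          refine ⟨α₁ / β₂, ?_, Or.inr ⟨by simp [hβ, hα2], ?_⟩⟩
          · field_simp
            linear_combination -hB
          · rw [inv_div]
            field_simp
      · have hα2 : α₂ ≠ 0 := by
          intro hz
          apply hβ
          have : β₁ ^ 3 = 0 := by rw [← hA, hz]; ring
          exact pow_eq_zero_iff (by norm_num) |>.mp this
        refine ⟨α₂ / β₁, ?_, Or.inr ⟨by field_simp, ?_⟩⟩
        · field_simp
          linear_combination hA
        · rw [inv_div]
          field_simp
          linear_combination -hY
  · rintro ⟨ω, hω, h⟩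
    have hω0 : ω ≠ 0 := fun hz => by simp [hz] at hω
    have hinv : ω⁻¹ = ω ^ 2 := inv_eq_of_mul_eq_one_right (by linear_combination hω)
    rcases h with ⟨h1, h2⟩ | ⟨h1, h2⟩ <;> subst h1 <;> subst h2 <;> rw [hinv]
    · exact ⟨by linear_combination (-4 * α₁ ^ 3 - (4 * β₁ ^ 3 - α₁ ^ 2 * β₁ ^ 2) * (ω ^ 3 + 1) +
          18 * α₁ * β₁) * hω, by linear_combination (-(α₁ * β₁)) * hω⟩
    · exact ⟨by linear_combination (-4 * β₁ ^ 3 - (4 * α₁ ^ 3 - α₁ ^ 2 * β₁ ^ 2) * (ω ^ 3 + 1) +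
          18 * α₁ * β₁) * hω, by linear_combination (-(α₁ * β₁)) * hω⟩
end

section
/- The set of points (X, Y) ∈ ℂ² satisfying both X + 128(Y − 9) = 0 and (X + Y² + 18Y − 27)² = 64Y³ is exactly {(0, 9), (−2048, 25), (−27648, 225)}. -/
/-- The intersection of the divisors `Δ₁ = {X + 128(Y−9) = 0}` and
`Δ₂ = {(X+Y²+18Y−27)² = 64Y³}` in `ℂ²` is exactly `{(0,9), (−2048,25), (−27648,225)}`. -/
theorem delta1_inter_delta2 :
    {p : ℂ × ℂ | p.1 + 128 * (p.2 - 9) = 0 ∧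
        (p.1 + p.2 ^ 2 + 18 * p.2 - 27) ^ 2 = 64 * p.2 ^ 3} =
      {(0, 9), (-2048, 25), (-27648, 225)} := by
  ext ⟨x, y⟩
  simp only [Set.mem_setOf_eq, Set.mem_insert_iff, Set.mem_singleton_iff, Prod.mk.injEq]
  constructor
  · rintro ⟨h1, h2⟩
    have hx : x = -128 * (y - 9) := by linear_combination h1
    subst hx
    have hfac : (y - 9) * ((y - 25) ^ 2 * (y - 225)) = 0 := by linear_combination h2
    rcases mul_eq_zero.mp hfac with h | h
    · left; exact ⟨by linear_combination -128 * h, by linear_combination h⟩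
    · rcases mul_eq_zero.mp h with h | h
      · have := pow_eq_zero_iff (n := 2) (by norm_num) |>.mp h
        right; left
        constructor
        · linear_combination -128 * this
        · linear_combination this
      · right; right
        constructor
        · linear_combination -128 * h
        · linear_combination h
  · rintro (⟨hx, hy⟩ | ⟨hx, hy⟩ | ⟨hx, hy⟩) <;> subst hx <;> subst hy <;> norm_num
end
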